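/- Flux reversal across an interface fixed pointwise (algebraic core of equation (2.2) of Lemma 2.1). Let d ≥ 2, let η ∈ ℝ^d with |η| = 1, and let M ∈ ℝ^{d×d} be invertible and satisfy M t = t for every t ∈ ℝ^d with ⟨t, η⟩ = 0, and ⟨Mη, η⟩ < 0. Then det M = ⟨Mη, η⟩ < 0, and for every symmetric matrix a ∈ ℝ^{d×d} and every ξ ∈ ℝ^d: ⟨ (M a Mᵀ / |det M|) (M^{-ᵀ} ξ), η ⟩ = − ⟨ a ξ, η ⟩. -/

import Mathlib

open MeasureTheory Metric Filter Set
open scoped Topology ENNReal Classical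

noncomputable section

abbrev Rd (d : ℕ) := EuclideanSpace ℝ (Fin d)

namespace CALR

variable {d : ℕ}

/-- i-th classical partial derivative of a complex-valued function. -/
def pd (i : Fin d) (φ : Rd d → ℂ) (x : Rd d) : ℂ :=
  fderiv ℝ φ x (EuclideanSpace.single i 1)

/-- `Du` is the weak gradient of `u` on the open set `U`. -/
def IsWeakGradient (U : Set (Rd d)) (u : Rd d → ℂ) (Du : Rd d → Fin d → ℂ) : Prop :=
  ∀ φ : Rd d → ℂ, ContDiff ℝ (⊤ : ℕ∞) φ → HasCompactSupport φ → tsupport φ ⊆ U →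
    ∀ i : Fin d, ∫ x in U, u x * pd i φ x = - ∫ x in U, Du x i * φ x

/-- `u ∈ H¹(U)` with weak gradient `Du`. -/
def MemH1 (U : Set (Rd d)) (u : Rd d → ℂ) (Du : Rd d → Fin d → ℂ) : Prop :=
  MemLp u 2 (volume.restrict U) ∧
  (∀ i : Fin d, MemLp (fun x => Du x i) 2 (volume.restrict U)) ∧
  IsWeakGradient U u Du

def gradNormSq (Du : Rd d → Fin d → ℂ) (x : Rd d) : ℝ := ∑ i, ‖Du x i‖ ^ 2

/-- The squared `H¹(U)` norm of `u` with gradient `Du`. -/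
def H1NormSq (U : Set (Rd d)) (u : Rd d → ℂ) (Du : Rd d → Fin d → ℂ) : ℝ :=
  ∫ x in U, (‖u x‖ ^ 2 + gradNormSq Du x)

/-- `u ∈ H¹₀(U)` with weak gradient `Du`. -/
def MemH10 (U : Set (Rd d)) (u : Rd d → ℂ) (Du : Rd d → Fin d → ℂ) : Prop :=
  MemH1 U u Du ∧
  ∀ ε : ℝ, 0 < ε → ∃ φ : Rd d → ℂ, ContDiff ℝ (⊤ : ℕ∞) φ ∧ HasCompactSupport φ ∧ tsupport φ ⊆ U ∧
    H1NormSq U (fun x => u x - φ x) (fun x i => Du x i - pd i φ x) < ε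

/-- `u` is a weak solution of `div (B ∇u) = f` in `U`, with weak gradient `Du`. -/
def IsWeakSolution (U : Set (Rd d)) (B : Rd d → Matrix (Fin d) (Fin d) ℂ)
    (u : Rd d → ℂ) (Du : Rd d → Fin d → ℂ) (f : Rd d → ℂ) : Prop :=
  MemH1 U u Du ∧
  ∀ φ : Rd d → ℂ, ContDiff ℝ (⊤ : ℕ∞) φ → HasCompactSupport φ → tsupport φ ⊆ U →
    ∫ x in U, ∑ i, (∑ j, B x i j * Du x j) * pd i φ x = - ∫ x in U, f x * φ x

/-- The coefficient `s_δ`. -/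
def sDelta (r₁ r₂ δ : ℝ) (x : Rd d) : ℂ :=
  if x ∈ ball (0 : Rd d) r₂ \ ball (0 : Rd d) r₁ then -1 + (δ : ℂ) * Complex.I else 1

/-- The (complex) coefficient matrix `s_δ A`. -/
def coefMatrix (A : Rd d → Matrix (Fin d) (Fin d) ℝ) (r₁ r₂ δ : ℝ) :
    Rd d → Matrix (Fin d) (Fin d) ℂ :=
  fun x => sDelta r₁ r₂ δ x • (A x).map (Complex.ofReal)

/-- Uniform ellipticity with constant `Λ` a.e. on `U`. -/
def UniformlyElliptic (U : Set (Rd d)) (A : Rd d → Matrix (Fin d) (Fin d) ℝ) (Λ : ℝ) : Prop :=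
  ∀ᵐ x ∂(volume.restrict U), ∀ ξ : Fin d → ℝ,
    Λ⁻¹ * (∑ i, ξ i ^ 2) ≤ (∑ i, (∑ j, A x i j * ξ j) * ξ i) ∧
    (∑ i, (∑ j, A x i j * ξ j) * ξ i) ≤ Λ * ∑ i, ξ i ^ 2

def SymmetricOn (U : Set (Rd d)) (A : Rd d → Matrix (Fin d) (Fin d) ℝ) : Prop :=
  ∀ x ∈ U, (A x).IsSymm

/-- Jacobian matrix of `T` at `x`. -/
def jacobian (T : Rd d → Rd d) (x : Rd d) : Matrix (Fin d) (Fin d) ℝ :=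
  fun i j => fderiv ℝ T x (EuclideanSpace.single j 1) i

/-- Pushforward `T_* a` of a matrix field `a` by a diffeomorphism `T` with inverse `Tinv`. -/
def pushforward (T Tinv : Rd d → Rd d) (a : Rd d → Matrix (Fin d) (Fin d) ℝ) :
    Rd d → Matrix (Fin d) (Fin d) ℝ :=
  fun y =>
    |(jacobian T (Tinv y)).det|⁻¹ •
      (jacobian T (Tinv y) * a (Tinv y) * (jacobian T (Tinv y)).transpose)

/-- `T` is a `C¹` diffeomorphism from `U` onto `V` with inverse `Tinv`. -/
structure DiffeoOn (T Tinv : Rd d → Rd d) (U V : Set (Rd d)) : Prop where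
  mapsTo : MapsTo T U V
  invMapsTo : MapsTo Tinv V U
  leftInv : ∀ x ∈ U, Tinv (T x) = x
  rightInv : ∀ y ∈ V, T (Tinv y) = y
  smooth : ContDiffOn ℝ 1 T U
  invSmooth : ContDiffOn ℝ 1 Tinv V

/-- `A` in `B_{ρ₃} ∖ B_{r₂}` and `-A` in `B_{r₂} ∖ B_{ρ₁}` are reflecting complementary. -/
structure ReflComp (d : ℕ) (A : Rd d → Matrix (Fin d) (Fin d) ℝ) (ρ₁ r₂ ρ₃ : ℝ) where
  F : Rd d → Rd d
  Finv : Rd d → Rd d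
  G : Rd d → Rd d
  Ginv : Rd d → Rd d
  x₁ : Rd d
  x₂ : Rd d
  radii : 0 < ρ₁ ∧ ρ₁ < r₂ ∧ r₂ < ρ₃
  F_diffeo : DiffeoOn F Finv (ball 0 r₂ \ closedBall 0 ρ₁) (ball 0 ρ₃ \ closedBall 0 r₂)
  F_nbhd : ∃ ε > 0, ContDiffOn ℝ 1 F {x : Rd d | r₂ - ε < ‖x‖ ∧ ‖x‖ < r₂ + ε}
  F_fix : ∀ x : Rd d, ‖x‖ = r₂ → F x = x
  F_push : ∀ y ∈ ball (0 : Rd d) ρ₃ \ closedBall 0 r₂, pushforward F Finv A y = A y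
  hx₁ : x₁ ∈ ball (0 : Rd d) ρ₁
  F_ext : DiffeoOn F Finv (ball 0 r₂ \ {x₁}) ((closedBall (0 : Rd d) r₂)ᶜ)
  hx₂ : x₂ ∈ ball (0 : Rd d) ρ₃
  G_diffeo : DiffeoOn G Ginv ((closedBall (0 : Rd d) ρ₃)ᶜ) (ball 0 ρ₃ \ {x₂})
  G_nbhd : ∃ ε > 0, ContDiffOn ℝ 1 G {x : Rd d | ρ₃ - ε < ‖x‖ ∧ ‖x‖ < ρ₃ + ε}
  G_fix : ∀ x : Rd d, ‖x‖ = ρ₃ → G x = x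
  GF_diffeo : DiffeoOn (fun x => if x = x₁ then x₂ else G (F x))
      (fun y => if y = x₂ then x₁ else Finv (Ginv y)) (ball 0 ρ₁) (ball 0 ρ₃)

/-- `s₀ A` is doubly complementary (with radii `r₁ < r₂ < r₃`). -/
structure DoublyComp (d : ℕ) (Ω : Set (Rd d)) (A : Rd d → Matrix (Fin d) (Fin d) ℝ)
    (r₁ r₂ r₃ : ℝ) extends ReflComp d A r₁ r₂ r₃ where
  subset : closedBall (0 : Rd d) r₃ ⊆ Ω
  doubly : ∀ y ∈ ball (0 : Rd d) r₃ \ closedBall 0 r₂,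
    pushforward G Ginv (pushforward F Finv A) y = A y

/-- The matrix `Â`. -/
def Ahat (A : Rd d → Matrix (Fin d) (Fin d) ℝ) (r₃ : ℝ) (F Finv G Ginv : Rd d → Rd d) :
    Rd d → Matrix (Fin d) (Fin d) ℝ :=
  fun x => if x ∈ ball (0 : Rd d) r₃ then pushforward G Ginv (pushforward F Finv A) x else A x

def C3On (A : Rd d → Matrix (Fin d) (Fin d) ℝ) (s : Set (Rd d)) : Prop :=
  ∀ i j, ContDiffOn ℝ 3 (fun x => A x i j) s

/-- Weak convergence `u_n ⇀ v` in `H¹(V)`. -/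
def WeakH1Conv (V : Set (Rd d)) (u : ℕ → Rd d → ℂ) (Du : ℕ → Rd d → Fin d → ℂ)
    (v : Rd d → ℂ) (Dv : Rd d → Fin d → ℂ) : Prop :=
  (∀ g : Rd d → ℂ, MemLp g 2 (volume.restrict V) →
    Tendsto (fun n => ∫ x in V, u n x * g x) atTop (𝓝 (∫ x in V, v x * g x))) ∧
  (∀ G : Rd d → Fin d → ℂ, (∀ i, MemLp (fun x => G x i) 2 (volume.restrict V)) →
    Tendsto (fun n => ∫ x in V, ∑ i, Du n x i * G x i) atTop
      (𝓝 (∫ x in V, ∑ i, Dv x i * G x i)))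

/-- `∫_{B_{r₂} ∖ B_{r₁}} |∇u|²`. -/
def powerInt (r₁ r₂ : ℝ) (Du : Rd d → Fin d → ℂ) : ℝ :=
  ∫ x in ball (0 : Rd d) r₂ \ ball 0 r₁, gradNormSq Du x

/-- Zero Cauchy data on `∂B_{rin}`: the extension of `w` by `0` to `B_{rout}` lies in
`H¹(B_{rout})` and solves `div(Ã ∇ w̃) = f 1_{B_{rout} ∖ B_{rin}}` weakly in `B_{rout}`. -/
def ZeroCauchyData (A : Rd d → Matrix (Fin d) (Fin d) ℝ) (f : Rd d → ℂ) (rin rout : ℝ)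
    (w : Rd d → ℂ) (Dw : Rd d → Fin d → ℂ) : Prop :=
  MemH1 (ball (0 : Rd d) rout)
    (fun x => if x ∈ ball (0 : Rd d) rin then 0 else w x)
    (fun x i => if x ∈ ball (0 : Rd d) rin then 0 else Dw x i) ∧
  IsWeakSolution (ball (0 : Rd d) rout)
    (fun x => ((if x ∈ ball (0 : Rd d) rin then (1 : Matrix (Fin d) (Fin d) ℝ) else A x).map
      Complex.ofReal))
    (fun x => if x ∈ ball (0 : Rd d) rin then 0 else w x)
    (fun x i => if x ∈ ball (0 : Rd d) rin then 0 else Dw x i)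
    (fun x => if x ∈ ball (0 : Rd d) rin then 0 else f x)

/-- The Kelvin transform with respect to `∂B_R`. -/
def kelvin (R : ℝ) : Rd d → Rd d := fun x => (R ^ 2 / ‖x‖ ^ 2) • x


open Matrix in
/-- Flux reversal across an interface fixed pointwise (algebraic core of Lemma 2.1, eq. (2.2)). -/
theorem flux_reversal
    (d : ℕ) (hd : 2 ≤ d)
    (η : Fin d → ℝ) (hη : ∑ i, η i ^ 2 = 1)
    (M : Matrix (Fin d) (Fin d) ℝ) (hM : IsUnit M.det)
    (htan : ∀ t : Fin d → ℝ, t ⬝ᵥ η = 0 → M.mulVec t = t)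
    (hneg : (M.mulVec η) ⬝ᵥ η < 0) :
    (M.det = (M.mulVec η) ⬝ᵥ η ∧ M.det < 0) ∧
    ∀ a : Matrix (Fin d) (Fin d) ℝ, a.IsSymm → ∀ ξ : Fin d → ℝ,
      ((|M.det|⁻¹ • (M * a * M.transpose)).mulVec ((M⁻¹).transpose.mulVec ξ)) ⬝ᵥ η
        = -((a.mulVec ξ) ⬝ᵥ η) := by
  have hηη : η ⬝ᵥ η = 1 := by simpa [dotProduct, sq] using hη
  set u : Fin d → ℝ := M.mulVec η - η with hu
  have hcol : ∀ j, M.mulVec (Pi.single j 1) = Pi.single j 1 - η j • η + η j • M.mulVec η := by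
    intro j
    have ht : (Pi.single j 1 - η j • η : Fin d → ℝ) ⬝ᵥ η = 0 := by
      rw [sub_dotProduct, smul_dotProduct, single_dotProduct, hηη]
      simp
    have h := htan _ ht
    rw [Matrix.mulVec_sub, Matrix.mulVec_smul] at h
    have := congrArg (· + η j • M.mulVec η) h
    simpa [sub_add_cancel] using this
  have hentry : ∀ i j, M i j = (if i = j then 1 else 0) + u i * η j := by
    intro i j
    have h := congrFun (hcol j) i
    have hMij : M.mulVec (Pi.single j 1) i = M i j := by
      simp [Matrix.mulVec, dotProduct, Pi.single_apply]
    rw [hMij] at h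
    simp only [Pi.add_apply, Pi.sub_apply, Pi.smul_apply, smul_eq_mul, Pi.single_apply] at h
    rw [h, hu]
    simp only [Pi.sub_apply]
    ring_nf
  have hMeq : M = 1 + Matrix.replicateCol (Fin 1) u * Matrix.replicateRow (Fin 1) η := by
    ext i j
    rw [hentry i j]
    simp [Matrix.mul_apply, Matrix.one_apply, Matrix.replicateCol, Matrix.replicateRow]
  have hdet : M.det = (M.mulVec η) ⬝ᵥ η := by
    conv_lhs => rw [hMeq]
    have hd1 : (1 + Matrix.replicateCol (Fin 1) u * Matrix.replicateRow (Fin 1) η).det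
        = 1 + η ⬝ᵥ u := det_one_add_replicateCol_mul_replicateRow u η
    rw [hd1, hu, dotProduct_sub, hηη, dotProduct_comm]
    ring
  have hdetneg : M.det < 0 := hdet ▸ hneg
  refine ⟨⟨hdet, hdetneg⟩, ?_⟩
  intro a ha ξ
  set c : ℝ := (M.mulVec η) ⬝ᵥ η with hc
  have hcval : c = 1 + u ⬝ᵥ η := by
    rw [hc, hu, sub_dotProduct, hηη]; ring
  have hkey : M.transpose.mulVec η = c • η := by
    funext i
    have h1 : Mᵀ.mulVec η i = ∑ j, M j i * η j := by
      simp [Matrix.mulVec, dotProduct, Matrix.transpose_apply]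
    have h2 : ∑ j, M j i * η j = ∑ j, ((if j = i then 1 else 0) + u j * η i) * η j :=
      Finset.sum_congr rfl fun j _ => by rw [hentry j i]
    rw [h1, h2]
    simp only [add_mul, ite_mul, one_mul, zero_mul, Finset.sum_add_distrib,
      Finset.sum_ite_eq', Finset.mem_univ, if_true, Pi.smul_apply, smul_eq_mul,
      hcval, dotProduct]
    rw [Finset.sum_mul]
    congr 1
    exact Finset.sum_congr rfl fun x _ => by ring
  have hTinv : Mᵀ * (M⁻¹)ᵀ = 1 := by
    rw [← Matrix.transpose_mul, Matrix.nonsing_inv_mul M hM, Matrix.transpose_one]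
  have habs : |M.det| = -c := by rw [abs_of_neg hdetneg, hdet]
  have hc0 : c ≠ 0 := ne_of_lt hneg
  rw [Matrix.smul_mulVec, smul_dotProduct, Matrix.mulVec_mulVec,
    show M * a * Mᵀ * (M⁻¹)ᵀ = M * a by rw [Matrix.mul_assoc (M*a), hTinv, Matrix.mul_one],
    ← Matrix.mulVec_mulVec, dotProduct_comm, Matrix.dotProduct_mulVec]
  have hvM : η ᵥ* M = c • η := by rw [← Matrix.mulVec_transpose]; exact hkey
  rw [hvM, smul_dotProduct, habs, dotProduct_comm]
  simp only [smul_eq_mul, inv_neg, neg_mul]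
  rw [← mul_assoc, inv_mul_cancel₀ hc0, one_mul]

end CALR
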